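/- Let $n_0$ and $n$ be positive integers, let $a$ be a real number with $2a > 1$, and define $\hat{\eta}_t = \frac{1}{n_0 + t}$. Then $\sum_{i = 1}^{n} \hat{\eta}_i^2 \exp\left(-2a \sum_{j = i+1}^{n} \hat{\eta}_j\right) \leq \left(\frac{n_0 + 2}{n_0 + 1}\right)^{2a} \cdot \left(\frac{1}{n + n_0 + 1}\right)^{2a} \cdot \sum_{i = 1}^{n} (i + n_0)^{2a - 2}$, where the empty sum $\sum_{j=n+1}^{n} \hat{\eta}_j$ is $0$. -/

import Mathlib

/-!
Comparing the shifted harmonic sum with the integral of `1/x` gives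
`∑_{j=i+1}^n 1/(n₀+j) ≥ log ((n₀+n+1)/(n₀+i+1))`, so the `i`-th exponential factor is at most
`((n₀+i+1)/(n₀+n+1))^{2a}`. Since `i ≥ 1`, `n₀+i+1 ≤ (n₀+2)/(n₀+1) · (n₀+i)`, and the bound
follows termwise after absorbing `η̂_i² = (n₀+i)^{-2}` into `(n₀+i)^{2a}`.
-/

open Real Finset

lemma log_add_one_sub_log_le_inv {x : ℝ} (hx : 0 < x) : log (x + 1) - log x ≤ 1 / x := by
  rw [← log_div (by positivity) hx.ne']
  calc log ((x + 1) / x) ≤ (x + 1) / x - 1 := log_le_sub_one_of_pos (by positivity)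
    _ = 1 / x := by field_simp; ring

lemma log_sub_log_le_sum_Icc_one_div_add {c : ℝ} (hc : -1 < c) {i n : ℕ} (hin : i ≤ n) :
    log (c + (n + 1)) - log (c + (i + 1)) ≤ ∑ j ∈ Icc (i + 1) n, 1 / (c + j) := by
  have htelescope := sum_Ico_sub (fun j : ℕ ↦ log (c + j)) (by omega : i + 1 ≤ n + 1)
  push_cast at htelescope
  rw [← htelescope, ← Finset.Ico_add_one_right_eq_Icc]
  refine sum_le_sum fun j hj ↦ ?_
  have hj1 : (1 : ℝ) ≤ j := by exact_mod_cast (mem_Ico.mp hj).1.trans' (by omega)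
  rw [← add_assoc]
  exact log_add_one_sub_log_le_inv (by linarith)

lemma exp_neg_mul_le_div_rpow {p S u v : ℝ} (hp : 0 ≤ p) (hu : 0 < u) (hv : 0 < v)
    (hS : log v - log u ≤ S) : exp (-p * S) ≤ (u / v) ^ p := by
  rw [rpow_def_of_pos (div_pos hu hv), log_div hu.ne' hv.ne']
  exact exp_le_exp.mpr (by nlinarith)

lemma add_one_le_div_mul_of_one_le {c x : ℝ} (hc : 0 < c + 1) (hx : 1 ≤ x) :
    c + x + 1 ≤ (c + 2) / (c + 1) * (c + x) := by
  rw [div_mul_eq_mul_div, le_div_iff₀ hc]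
  nlinarith

lemma one_div_sq_mul_rpow_le {p y A K : ℝ} (hp : 0 ≤ p) (hy : 0 < y) (hA : 0 < A)
    (hK : y + 1 ≤ K * y) : (1 / y) ^ 2 * ((y + 1) / A) ^ p ≤ K ^ p * (1 / A) ^ p * y ^ (p - 2) := by
  have hpow : (y + 1) ^ p ≤ K ^ p * y ^ p := by
    rw [← mul_rpow (by nlinarith) hy.le]
    exact rpow_le_rpow (by positivity) hK hp
  have hsub : y ^ (p - 2) = y ^ p * (1 / y) ^ 2 := by
    rw [rpow_sub hy, rpow_two]; field_simp
  rw [div_eq_mul_one_div (y + 1), mul_rpow (by positivity) (by positivity), hsub]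
  calc (1 / y) ^ 2 * ((y + 1) ^ p * (1 / A) ^ p)
      ≤ (1 / y) ^ 2 * (K ^ p * y ^ p * (1 / A) ^ p) := by gcongr
    _ = K ^ p * (1 / A) ^ p * (y ^ p * (1 / y) ^ 2) := by ring

theorem stmt_9_general (n0 n : ℕ) (a : ℝ) (ha : 1 < 2 * a) :
    ∑ i ∈ Finset.Icc 1 n,
        (1 / ((n0 : ℝ) + i)) ^ 2 *
          Real.exp (-(2 * a) * ∑ j ∈ Finset.Icc (i + 1) n, 1 / ((n0 : ℝ) + j)) ≤
      (((n0 : ℝ) + 2) / ((n0 : ℝ) + 1)) ^ (2 * a) *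
        (1 / ((n : ℝ) + n0 + 1)) ^ (2 * a) *
          ∑ i ∈ Finset.Icc 1 n, ((i : ℝ) + n0) ^ (2 * a - 2) := by
  rw [mul_sum]
  refine sum_le_sum fun i hi ↦ ?_
  obtain ⟨hi1, hin⟩ := mem_Icc.mp hi
  have hi1' : (1 : ℝ) ≤ i := by exact_mod_cast hi1
  have hp : 0 ≤ 2 * a := by linarith
  have htail := log_sub_log_le_sum_Icc_one_div_add (c := (n0 : ℝ))
    (by linarith [Nat.cast_nonneg (α := ℝ) n0]) hin
  rw [add_comm (i : ℝ)]
  calc (1 / ((n0 : ℝ) + i)) ^ 2 *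
        exp (-(2 * a) * ∑ j ∈ Icc (i + 1) n, 1 / ((n0 : ℝ) + j))
      ≤ (1 / ((n0 : ℝ) + i)) ^ 2 * ((n0 + i + 1) / ((n : ℝ) + n0 + 1)) ^ (2 * a) := by
        gcongr
        refine exp_neg_mul_le_div_rpow hp (by positivity) (by positivity) ?_
        convert htail using 3 <;> ring
    _ ≤ _ := one_div_sq_mul_rpow_le hp (by positivity) (by positivity)
        (add_one_le_div_mul_of_one_le (by positivity) hi1')

/-- with `η̂_t = 1/(n₀ + t)` and `2a > 1`,
`∑_{i=1}^n η̂_i² exp(-2a ∑_{j=i+1}^n η̂_j)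
  ≤ ((n₀+2)/(n₀+1))^{2a} · (1/(n+n₀+1))^{2a} · ∑_{i=1}^n (i+n₀)^{2a-2}`
(the empty tail sum for `i = n` being `0`). -/
theorem stmt_9 (n0 n : ℕ) (hn0 : 0 < n0) (hn : 0 < n) (a : ℝ) (ha : 1 < 2 * a) :
    ∑ i ∈ Finset.Icc 1 n,
        (1 / ((n0 : ℝ) + i)) ^ 2 *
          Real.exp (-(2 * a) * ∑ j ∈ Finset.Icc (i + 1) n, 1 / ((n0 : ℝ) + j)) ≤
      (((n0 : ℝ) + 2) / ((n0 : ℝ) + 1)) ^ (2 * a) *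
        (1 / ((n : ℝ) + n0 + 1)) ^ (2 * a) *
          ∑ i ∈ Finset.Icc 1 n, ((i : ℝ) + n0) ^ (2 * a - 2) :=
  stmt_9_general n0 n a ha
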